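/- arXiv:1601.07231 — 13 statements merged into one kernel-verified Lean document; each statement's English description precedes it below -/
import Mathlib

section
/- In a partial Sherk plane, there exist three non-collinear points. -/
structure PartialSherkPlane (Point Line : Type*) where
  Inc : Point → Line → Prop
  Perp : Line → Line → Prop
  aStar : ∀ P Q : Point, P ≠ Q → ∀ l m : Line,
    Inc P l → Inc Q l → Inc P m → Inc Q m → l = m
  b1 : ∀ l m : Line, Perp l m → Perp m l
  b2 : ∀ l m : Line, Perp l m → ∃ P : Point, Inc P l ∧ Inc P m
  b3 : ∀ (P : Point) (l : Line), ∃ m : Line, Inc P m ∧ Perp m l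
  b4 : ∀ (P : Point) (l : Line), Inc P l → ∃! m : Line, Inc P m ∧ Perp m l
  b5 : ∃ x y z : Line, Perp x y ∧ ¬ Perp x z ∧ ¬ Perp y z ∧
    ¬ ∃ P : Point, Inc P x ∧ Inc P y ∧ Inc P z

/-- `P` is a pole of `l`: `P` is not on `l` and at least two distinct
perpendiculars to `l` pass through `P`. -/
def PartialSherkPlane.IsPole {Point Line : Type*} (G : PartialSherkPlane Point Line)
    (P : Point) (l : Line) : Prop :=
  ¬ G.Inc P l ∧ ∃ g h : Line, g ≠ h ∧ G.Inc P g ∧ G.Inc P h ∧ G.Perp g l ∧ G.Perp h l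

theorem stmt_0 {Point Line : Type*} (G : PartialSherkPlane Point Line) :
    ∃ P Q R : Point, P ≠ Q ∧ P ≠ R ∧ Q ≠ R ∧
      ¬ ∃ l : Line, G.Inc P l ∧ G.Inc Q l ∧ G.Inc R l := by
  obtain ⟨x, y, z, pxy, nxz, nyz, hnc⟩ := G.b5
  obtain ⟨A, hAx, hAy⟩ := G.b2 x y pxy
  obtain ⟨m, hAm, hmz⟩ := G.b3 A z
  obtain ⟨B, hBm, hBz⟩ := G.b2 m z hmz
  have hAB : A ≠ B := by
    rintro rfl
    exact hnc ⟨A, hAx, hAy, hBz⟩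
  obtain ⟨n, hBn, hnx⟩ := G.b3 B x
  obtain ⟨C, hCn, hCx⟩ := G.b2 n x hnx
  have hxm : x ≠ m := by
    rintro rfl
    exact nxz hmz
  have hAC : A ≠ C := by
    rintro rfl
    have hnm : n = m := G.aStar A B hAB n m hCn hBn hAm hBm
    have hmx : G.Perp m x := hnm ▸ hnx
    have hyx : G.Perp y x := G.b1 x y pxy
    obtain ⟨u, _, hu⟩ := G.b4 A x hAx
    have : y = m := (hu y ⟨hAy, hyx⟩).trans (hu m ⟨hAm, hmx⟩).symm
    exact nyz (this ▸ hmz)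
  have hBC : B ≠ C := by
    rintro rfl
    exact hxm (G.aStar A B hAB x m hAx hCx hAm hBm)
  refine ⟨A, B, C, hAB, hAC, hBC, ?_⟩
  rintro ⟨l, hAl, hBl, hCl⟩
  have hlm : l = m := G.aStar A B hAB l m hAl hBl hAm hBm
  exact hxm (G.aStar A C hAC x m hAx hCx hAm (hlm ▸ hCl))
end

section
/- In a partial Sherk plane, some line is incident with at least three distinct points. -/
theorem stmt_1 {Point Line : Type*} (G : PartialSherkPlane Point Line) :
    ∃ (l : Line) (P Q R : Point), P ≠ Q ∧ P ≠ R ∧ Q ≠ R ∧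
      G.Inc P l ∧ G.Inc Q l ∧ G.Inc R l := by
  classical
  obtain ⟨x, y, z, hxy, hxz, hyz, hnc⟩ := G.b5
  obtain ⟨A, hAx, hAy⟩ := G.b2 x y hxy
  have hAz : ¬ G.Inc A z := fun h => hnc ⟨A, hAx, hAy, h⟩
  obtain ⟨m, hAm, hmz⟩ := G.b3 A z
  obtain ⟨F, hFm, hFz⟩ := G.b2 m z hmz
  have hAF : A ≠ F := fun h => hAz (h ▸ hFz)
  -- x ≠ y
  have hxyne : x ≠ y := by
    intro h
    have hxx : G.Perp x x := by rw [h] at hxy ⊢; exact hxy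
    obtain ⟨q, hFq, hqx⟩ := G.b3 F x
    obtain ⟨B, hBq, hBx⟩ := G.b2 q x hqx
    obtain ⟨w, hw, huniq⟩ := G.b4 B x hBx
    have h1 : q = w := huniq q ⟨hBq, hqx⟩
    have h2 : x = w := huniq x ⟨hBx, hxx⟩
    have : G.Inc F x := by rw [h1, ← h2] at hFq; exact hFq
    exact hnc ⟨F, this, h ▸ this, hFz⟩
  -- feet of perpendiculars from F to x and y
  obtain ⟨q, hFq, hqx⟩ := G.b3 F x
  obtain ⟨B, hBq, hBx⟩ := G.b2 q x hqx
  obtain ⟨r, hFr, hry⟩ := G.b3 F y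
  obtain ⟨C, hCr, hCy⟩ := G.b2 r y hry
  -- B ≠ A
  have hBA : B ≠ A := by
    intro h
    obtain ⟨w, hw, huniq⟩ := G.b4 A x hAx
    have h1 : q = w := huniq q ⟨h ▸ hBq, hqx⟩
    have h2 : y = w := huniq y ⟨hAy, G.b1 x y hxy⟩
    have hFy : G.Inc F y := by rw [h1, ← h2] at hFq; exact hFq
    have : y = m := G.aStar A F hAF y m hAy hFy hAm hFm
    exact hyz (this ▸ hmz)
  -- C ≠ A
  have hCA : C ≠ A := by
    intro h
    obtain ⟨w, hw, huniq⟩ := G.b4 A y hAy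
    have h1 : r = w := huniq r ⟨h ▸ hCr, hry⟩
    have h2 : x = w := huniq x ⟨hAx, hxy⟩
    have hFx : G.Inc F x := by rw [h1, ← h2] at hFr; exact hFr
    have : x = m := G.aStar A F hAF x m hAx hFx hAm hFm
    exact hxz (this ▸ hmz)
  -- F not on x, not on y
  have hFx : ¬ G.Inc F x := by
    intro h
    have : x = m := G.aStar A F hAF x m hAx h hAm hFm
    exact hxz (this ▸ hmz)
  have hFy : ¬ G.Inc F y := by
    intro h
    have : y = m := G.aStar A F hAF y m hAy h hAm hFm
    exact hyz (this ▸ hmz)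
  have hFB : F ≠ B := fun h => hFx (h ▸ hBx)
  have hFC : F ≠ C := fun h => hFy (h ▸ hCy)
  have hBC : B ≠ C := by
    intro h
    exact hxyne (G.aStar A B (Ne.symm hBA) x y hAx hBx hAy (h ▸ hCy))
  -- z is the unique perpendicular to m at F
  have hz_uniq : ∀ t : Line, G.Inc F t → G.Perp t m → t = z := by
    intro t hFt htm
    obtain ⟨w, hw, huniq⟩ := G.b4 F m hFm
    rw [huniq t ⟨hFt, htm⟩, huniq z ⟨hFz, G.b1 m z hmz⟩]
  -- u: unique perpendicular to m at A
  obtain ⟨u, ⟨hAu, hum⟩, hu_uniq⟩ := G.b4 A m hAm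
  -- perpendicular from B to m
  obtain ⟨t, hBt, htm⟩ := G.b3 B m
  obtain ⟨E, hEt, hEm⟩ := G.b2 t m htm
  by_cases hEF : E = F
  · -- t = z, so B ∈ z, so z = q, so x ⊥ z : contradiction
    have ht : t = z := hz_uniq t (hEF ▸ hEt) htm
    have hBz : G.Inc B z := ht ▸ hBt
    have : z = q := G.aStar F B hFB z q hFz hBz hFq hBq
    have hzx : G.Perp z x := by rw [this]; exact hqx
    exact absurd (G.b1 z x hzx) hxz
  by_cases hEA : E = A
  · -- B ∈ u
    have ht : t = u := hu_uniq t ⟨hEA ▸ hEt, htm⟩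
    have hBu : G.Inc B u := ht ▸ hBt
    -- perpendicular from C to m
    obtain ⟨t', hCt', ht'm⟩ := G.b3 C m
    obtain ⟨E', hE't', hE'm⟩ := G.b2 t' m ht'm
    by_cases hE'F : E' = F
    · have ht' : t' = z := hz_uniq t' (hE'F ▸ hE't') ht'm
      have hCz : G.Inc C z := ht' ▸ hCt'
      have : z = r := G.aStar F C hFC z r hFz hCz hFr hCr
      have hzy : G.Perp z y := by rw [this]; exact hry
      exact absurd (G.b1 z y hzy) hyz
    by_cases hE'A : E' = A
    · have ht' : t' = u := hu_uniq t' ⟨hE'A ▸ hE't', ht'm⟩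
      have hCu : G.Inc C u := ht' ▸ hCt'
      exact ⟨u, A, B, C, Ne.symm hBA, Ne.symm hCA, hBC, hAu, hBu, hCu⟩
    · exact ⟨m, A, F, E', hAF, fun h => hE'A h.symm, fun h => hE'F h.symm,
        hAm, hFm, hE'm⟩
  · exact ⟨m, A, F, E, hAF, fun h => hEA h.symm, fun h => hEF h.symm, hAm, hFm, hEm⟩
end

section
/- In a partial Sherk plane, no line is perpendicular to itself. -/
theorem stmt_2 {Point Line : Type*} (G : PartialSherkPlane Point Line) :
    ∀ l : Line, ¬ G.Perp l l := by
  intro l hll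
  -- Step 1: every perpendicular to l equals l
  have step1 : ∀ m : Line, G.Perp m l → m = l := by
    intro m hm
    obtain ⟨R, hRm, hRl⟩ := G.b2 m l hm
    obtain ⟨n, hn, hun⟩ := G.b4 R l hRl
    have h1 := hun m ⟨hRm, hm⟩
    have h2 := hun l ⟨hRl, hll⟩
    rw [h1, h2]
  -- Step 2: every point lies on l
  have step2 : ∀ P : Point, G.Inc P l := by
    intro P
    obtain ⟨m, hPm, hml⟩ := G.b3 P l
    rw [step1 m hml] at hPm
    exact hPm
  obtain ⟨x, y, z, hxy, hxz, hyz, hcon⟩ := G.b5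
  -- Step 3: every line has a point
  obtain ⟨P0, hP0x, hP0y⟩ := G.b2 x y hxy
  have step3 : ∀ m : Line, ∃ Q : Point, G.Inc Q m := by
    intro m
    obtain ⟨n, _, hnm⟩ := G.b3 P0 m
    obtain ⟨Q, _, hQm⟩ := G.b2 n m hnm
    exact ⟨Q, hQm⟩
  -- Step 4: there exist two distinct points
  have step4 : ∃ A B : Point, A ≠ B := by
    by_contra h
    push_neg at h
    obtain ⟨Q, hQz⟩ := step3 z
    exact hcon ⟨P0, hP0x, hP0y, (h P0 Q) ▸ hQz⟩
  obtain ⟨A, B, hAB⟩ := step4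
  -- Step 5: every line equals l
  have step5 : ∀ m : Line, m = l := by
    intro m
    obtain ⟨Q, hQm⟩ := step3 m
    obtain ⟨P, hPQ⟩ : ∃ P : Point, P ≠ Q := by
      by_cases h : A = Q
      · exact ⟨B, fun hB => hAB (h ▸ hB ▸ rfl)⟩
      · exact ⟨A, h⟩
    obtain ⟨n, hPn, hnm⟩ := G.b3 P m
    obtain ⟨R, hRn, hRm⟩ := G.b2 n m hnm
    by_cases hRQ : R = Q
    · -- n passes through P and Q, as does l, so n = l
      have hnl : n = l := G.aStar P Q hPQ n l hPn (hRQ ▸ hRn) (step2 P) (step2 Q)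
      rw [hnl] at hnm
      exact step1 m (G.b1 l m hnm)
    · -- m has two distinct points R, Q, both on l
      exact G.aStar R Q hRQ m l hRm hQm (step2 R) (step2 Q)
  exact hxz (step5 x ▸ step5 z ▸ hll)
end

section
/- In a finite partial Sherk plane, the number of lines incident with any given point is even. -/
/-- No line is perpendicular to itself. -/
lemma PartialSherkPlane.not_self_perp {Point Line : Type*}
    (G : PartialSherkPlane Point Line) (l : Line) : ¬ G.Perp l l := by
  intro hll
  -- every line perpendicular to l equals l
  have key : ∀ m : Line, G.Perp m l → m = l := by
    intro m hml
    obtain ⟨R, hRm, hRl⟩ := G.b2 m l hml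
    exact (G.b4 R l hRl).unique ⟨hRm, hml⟩ ⟨hRl, hll⟩
  -- every point lies on l
  have allOn : ∀ Q : Point, G.Inc Q l := by
    intro Q
    obtain ⟨m, hQm, hml⟩ := G.b3 Q l
    rwa [key m hml] at hQm
  obtain ⟨x, y, z, hxy, _, _, hnc⟩ := G.b5
  obtain ⟨Q, hQx, hQy⟩ := G.b2 x y hxy
  apply hnc
  refine ⟨Q, hQx, hQy, ?_⟩
  obtain ⟨m, hQm, hmz⟩ := G.b3 Q z
  obtain ⟨R, hRm, hRz⟩ := G.b2 m z hmz
  by_cases hQR : Q = R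
  · rwa [hQR]
  · have hml : m = l := G.aStar Q R hQR m l hQm hRm (allOn Q) (allOn R)
    have hlz : G.Perp z l := G.b1 l z (hml ▸ hmz)
    have : z = l := (G.b4 R l (allOn R)).unique ⟨hRz, hlz⟩ ⟨allOn R, hll⟩
    rw [this]; exact allOn Q

/-- A fixed-point-free involution on a finite type makes its card even. -/
lemma even_card_of_fpf_involutive {α : Type*} [Fintype α] [DecidableEq α]
    (f : α → α) (hf : Function.Involutive f) (hfp : ∀ a, f a ≠ a) :
    Even (Fintype.card α) := by
  suffices h : ∀ s : Finset α, (∀ a ∈ s, f a ∈ s) → Even s.card by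
    simpa using h Finset.univ (by simp)
  intro s
  induction s using Finset.strongInduction with
  | _ s ih =>
    intro hs
    rcases s.eq_empty_or_nonempty with rfl | ⟨a, ha⟩
    · simp
    · set t := s \ {a, f a} with ht
      have hfa : f a ∈ s := hs a ha
      have htsub : t ⊂ s := by
        refine Finset.ssubset_iff_of_subset (Finset.sdiff_subset) |>.mpr ⟨a, ha, by simp [ht]⟩
      have htcard : t.card = s.card - 2 := by
        rw [ht, Finset.card_sdiff_of_subset, Finset.card_pair (Ne.symm (hfp a))]
        intro b hb
        simp only [Finset.mem_insert, Finset.mem_singleton] at hb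
        rcases hb with rfl | rfl
        · exact ha
        · exact hfa
      have htval : Even t.card := by
        apply ih t htsub
        intro b hb
        simp only [ht, Finset.mem_sdiff, Finset.mem_insert, Finset.mem_singleton] at hb ⊢
        obtain ⟨hbs, hb2⟩ := hb
        push_neg at hb2 ⊢
        refine ⟨hs b hbs, ?_, ?_⟩
        · intro h; exact hb2.2 (by rw [← h, hf b])
        · intro h; exact hb2.1 (hf.injective h)
      have h2le : 2 ≤ s.card := by
        have : ({a, f a} : Finset α) ⊆ s := by
          intro b hb
          simp only [Finset.mem_insert, Finset.mem_singleton] at hb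
          rcases hb with rfl | rfl
          · exact ha
          · exact hfa
        calc 2 = ({a, f a} : Finset α).card := (Finset.card_pair (Ne.symm (hfp a))).symm
          _ ≤ s.card := Finset.card_le_card this
      have : s.card = t.card + 2 := by omega
      rw [this]
      exact htval.add (even_two)

theorem stmt_3 {Point Line : Type*} [Fintype Point] [Fintype Line]
    (G : PartialSherkPlane Point Line) (P : Point) :
    Even (Nat.card {l : Line // G.Inc P l}) := by
  classical
  let f : {l : Line // G.Inc P l} → {l : Line // G.Inc P l} := fun l =>
    ⟨(G.b4 P l.1 l.2).choose, (G.b4 P l.1 l.2).choose_spec.1.1⟩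
  have hperp : ∀ l : {l : Line // G.Inc P l}, G.Perp (f l).1 l.1 := fun l =>
    (G.b4 P l.1 l.2).choose_spec.1.2
  have hinv : Function.Involutive f := by
    intro l
    apply Subtype.ext
    exact (G.b4 P (f l).1 (f l).2).unique ⟨(f (f l)).2, hperp (f l)⟩
      ⟨l.2, G.b1 _ _ (hperp l)⟩
  have hfp : ∀ l, f l ≠ l := by
    intro l h
    have hp := hperp l
    rw [h] at hp
    exact G.not_self_perp l.1 hp
  rw [Nat.card_eq_fintype_card]
  exact even_card_of_fpf_involutive f hinv hfp
end

section
/- In a finite partial Sherk plane, for any line ℓ, the number of lines perpendicular to ℓ equals the number of points incident with ℓ. -/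
theorem stmt_5 {Point Line : Type*} [Fintype Point] [Fintype Line]
    (G : PartialSherkPlane Point Line) (l : Line) :
    Nat.card {m : Line // G.Perp m l} = Nat.card {P : Point // G.Inc P l} := by
  -- Step 1: no line is perpendicular to itself.
  have hnll : ¬ G.Perp l l := by
    intro hll
    -- every perpendicular to l equals l
    have hperp : ∀ n, G.Perp n l → n = l := by
      intro n hn
      obtain ⟨Q, hQn, hQl⟩ := G.b2 n l hn
      obtain ⟨m, _, hu⟩ := G.b4 Q l hQl
      rw [hu n ⟨hQn, hn⟩, hu l ⟨hQl, hll⟩]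
    -- every point lies on l
    have hall : ∀ R : Point, G.Inc R l := by
      intro R
      obtain ⟨m, hRm, hml⟩ := G.b3 R l
      rw [hperp m hml] at hRm; exact hRm
    obtain ⟨x, y, z, hxy, hxz, _, hnP⟩ := G.b5
    obtain ⟨P, hPx, hPy⟩ := G.b2 x y hxy
    -- every line contains a point
    have hline : ∀ n : Line, ∃ S, G.Inc S n := by
      intro n
      obtain ⟨m, _, hmn⟩ := G.b3 P n
      obtain ⟨S, _, hSn⟩ := G.b2 m n hmn
      exact ⟨S, hSn⟩
    by_cases htwo : ∃ R : Point, R ≠ P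
    · obtain ⟨R, hRP⟩ := htwo
      have hle : ∀ n : Line, n = l := by
        intro n
        obtain ⟨Q, hQn⟩ := hline n
        by_cases h : ∀ S, G.Inc S n → S = Q
        · obtain ⟨R', hR'⟩ : ∃ R', R' ≠ Q := by
            by_cases hQP : Q = P
            · exact ⟨R, by rw [hQP]; exact hRP⟩
            · exact ⟨P, fun e => hQP e.symm⟩
          obtain ⟨m', hR'm', hm'n⟩ := G.b3 R' n
          obtain ⟨S, hSm', hSn⟩ := G.b2 m' n hm'n
          have hQm' : G.Inc Q m' := by rw [← h S hSn]; exact hSm'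
          have hm'l : m' = l := G.aStar R' Q hR' m' l hR'm' hQm' (hall R') (hall Q)
          exact hperp n (G.b1 l n (hm'l ▸ hm'n))
        · push_neg at h
          obtain ⟨S, hSn, hSQ⟩ := h
          exact G.aStar S Q hSQ n l hSn hQn (hall S) (hall Q)
      exact hxz (by rw [hle x, hle z]; exact hll)
    · push_neg at htwo
      obtain ⟨S, hSz⟩ := hline z
      exact hnP ⟨P, hPx, hPy, htwo S ▸ hSz⟩
  -- Step 2: each perpendicular to l has a unique foot on l.
  have hfoot : ∀ m, G.Perp m l → ∀ P Q : Point,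
      G.Inc P l → G.Inc P m → G.Inc Q l → G.Inc Q m → P = Q := by
    intro m hm P Q hPl hPm hQl hQm
    by_contra hPQ
    exact hnll ((G.aStar P Q hPQ l m hPl hQl hPm hQm) ▸ hm)
  -- The foot map.
  let f : {m : Line // G.Perp m l} → {P : Point // G.Inc P l} :=
    fun m => ⟨(G.b2 m.1 l m.2).choose, (G.b2 m.1 l m.2).choose_spec.2⟩
  have hfm : ∀ m : {m : Line // G.Perp m l}, G.Inc (f m).1 m.1 :=
    fun m => (G.b2 m.1 l m.2).choose_spec.1
  have hbij : Function.Bijective f := by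
    constructor
    · rintro ⟨m, hm⟩ ⟨m', hm'⟩ hff
      have h1 := hfm ⟨m, hm⟩
      have h2 := hfm ⟨m', hm'⟩
      rw [hff] at h1
      obtain ⟨n, _, hu⟩ := G.b4 (f ⟨m', hm'⟩).1 l (f ⟨m', hm'⟩).2
      exact Subtype.ext ((hu m ⟨h1, hm⟩).trans (hu m' ⟨h2, hm'⟩).symm)
    · rintro ⟨P, hP⟩
      obtain ⟨m, ⟨hPm, hml⟩, _⟩ := G.b4 P l hP
      refine ⟨⟨m, hml⟩, Subtype.ext ?_⟩
      exact hfoot m hml _ P (f ⟨m, hml⟩).2 (hfm ⟨m, hml⟩) hP hPm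
  exact Nat.card_eq_of_bijective f hbij
end

section
/- In a finite partial Sherk plane, if two lines ℓ and m are not perpendicular, then ℓ and m are incident with the same number of points. -/
theorem stmt_6 {Point Line : Type*} [Fintype Point] [Fintype Line]
    (G : PartialSherkPlane Point Line) {l m : Line} (h : ¬ G.Perp l m) :
    Nat.card {P : Point // G.Inc P l} = Nat.card {P : Point // G.Inc P m} := by
  have key : ∀ l m : Line, ¬ G.Perp l m →
      Nat.card {P : Point // G.Inc P l} ≤ Nat.card {P : Point // G.Inc P m} := by
    intro l m h
    have hf : ∀ P : {P : Point // G.Inc P l}, ∃ Q : {P : Point // G.Inc P m},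
        ∃ g : Line, G.Inc P.1 g ∧ G.Perp g m ∧ G.Inc Q.1 g := by
      rintro ⟨P, hP⟩
      obtain ⟨g, hPg, hgm⟩ := G.b3 P m
      obtain ⟨Q, hQg, hQm⟩ := G.b2 g m hgm
      exact ⟨⟨Q, hQm⟩, g, hPg, hgm, hQg⟩
    choose f g hg1 hg2 hg3 using hf
    have hinj : Function.Injective f := by
      intro P P' hPP'
      by_contra hne
      have hPne : P.1 ≠ P'.1 := fun h' => hne (Subtype.ext h')
      have hgg : g P = g P' := by
        obtain ⟨n, hn, hun⟩ := G.b4 (f P).1 m (f P).2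
        have h1 := hun (g P) ⟨hg3 P, hg2 P⟩
        have h2 := hun (g P') ⟨hPP'.symm ▸ hg3 P', hg2 P'⟩
        exact h1.trans h2.symm
      have hgl : g P = l :=
        G.aStar P.1 P'.1 hPne (g P) l (hg1 P) (hgg.symm ▸ hg1 P') P.2 P'.2
      exact h (hgl ▸ hg2 P)
    exact Nat.card_le_card_of_injective f hinj
  exact le_antisymm (key l m h) (key m l (fun h' => h (G.b1 m l h')))
end

section
/- In a finite partial Sherk plane, if lines ℓ and m are perpendicular and g is any line not perpendicular to m, then ℓ and g intersect in at least one point. -/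
theorem stmt_7 {Point Line : Type*} [Fintype Point] [Fintype Line]
    (G : PartialSherkPlane Point Line) {l m g : Line}
    (hlm : G.Perp l m) (hgm : ¬ G.Perp g m) :
    ∃ P : Point, G.Inc P l ∧ G.Inc P g := by
  classical
  -- γ : points of g → points of m (foot of a perpendicular to m)
  have hγ : ∀ X : {P : Point // G.Inc P g}, ∃ Q : {P : Point // G.Inc P m},
      ∃ n : Line, G.Inc X.1 n ∧ G.Perp n m ∧ G.Inc Q.1 n := by
    intro X
    obtain ⟨n, hXn, hnm⟩ := G.b3 X.1 m
    obtain ⟨Q, hQn, hQm⟩ := G.b2 n m hnm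
    exact ⟨⟨Q, hQm⟩, n, hXn, hnm, hQn⟩
  choose γ nγ hXnγ hperpγ hQnγ using hγ
  have hγinj : Function.Injective γ := by
    intro X X' hQ
    by_contra hne
    have hne' : X.1 ≠ X'.1 := fun h => hne (Subtype.ext h)
    obtain ⟨u, -, huniq⟩ := G.b4 (γ X).1 m (γ X).2
    have e1 := huniq (nγ X) ⟨hQnγ X, hperpγ X⟩
    have e2 := huniq (nγ X') ⟨hQ ▸ hQnγ X', hperpγ X'⟩
    have hn : nγ X = nγ X' := e1.trans e2.symm
    have hgeq : nγ X = g :=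
      G.aStar X.1 X'.1 hne' (nγ X) g (hXnγ X) (hn ▸ hXnγ X') X.2 X'.2
    exact hgm (hgeq ▸ hperpγ X)
  -- δ : points of m → points of g (foot of a perpendicular to g)
  have hδ : ∀ Y : {P : Point // G.Inc P m}, ∃ Q : {P : Point // G.Inc P g},
      ∃ n : Line, G.Inc Y.1 n ∧ G.Perp n g ∧ G.Inc Q.1 n := by
    intro Y
    obtain ⟨n, hYn, hng⟩ := G.b3 Y.1 g
    obtain ⟨Q, hQn, hQg⟩ := G.b2 n g hng
    exact ⟨⟨Q, hQg⟩, n, hYn, hng, hQn⟩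
  choose δ nδ hYnδ hperpδ hQnδ using hδ
  have hδinj : Function.Injective δ := by
    intro Y Y' hQ
    by_contra hne
    have hne' : Y.1 ≠ Y'.1 := fun h => hne (Subtype.ext h)
    obtain ⟨u, -, huniq⟩ := G.b4 (δ Y).1 g (δ Y).2
    have e1 := huniq (nδ Y) ⟨hQnδ Y, hperpδ Y⟩
    have e2 := huniq (nδ Y') ⟨hQ ▸ hQnδ Y', hperpδ Y'⟩
    have hn : nδ Y = nδ Y' := e1.trans e2.symm
    have hmeq : nδ Y = m :=
      G.aStar Y.1 Y'.1 hne' (nδ Y) m (hYnδ Y) (hn ▸ hYnδ Y') Y.2 Y'.2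
    exact hgm (G.b1 m g (hmeq ▸ hperpδ Y))
  -- cardinalities are equal, so γ is surjective
  have hcard : Fintype.card {P : Point // G.Inc P g} = Fintype.card {P : Point // G.Inc P m} :=
    le_antisymm (Fintype.card_le_of_injective γ hγinj) (Fintype.card_le_of_injective δ hδinj)
  have hγsurj : Function.Surjective γ :=
    ((Fintype.bijective_iff_injective_and_card γ).2 ⟨hγinj, hcard⟩).2
  obtain ⟨A, hAl, hAm⟩ := G.b2 l m hlm
  obtain ⟨X, hX⟩ := hγsurj ⟨A, hAm⟩
  -- the perpendicular to m through A is unique, so nγ X = l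
  obtain ⟨u, -, huniq⟩ := G.b4 A m hAm
  have hAn : G.Inc A (nγ X) := by
    have := hQnγ X
    rw [hX] at this
    exact this
  have e1 := huniq (nγ X) ⟨hAn, hperpγ X⟩
  have e2 := huniq l ⟨hAl, hlm⟩
  have : nγ X = l := e1.trans e2.symm
  exact ⟨X.1, this ▸ hXnγ X, X.2⟩
end

section
/- In a finite partial Sherk plane, for any point P and line ℓ with P not incident with ℓ, either every line incident with P is perpendicular to ℓ, or there is exactly one line incident with P and perpendicular to ℓ. -/
theorem stmt_8 {Point Line : Type*} [Fintype Point] [Fintype Line]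
    (G : PartialSherkPlane Point Line) {P : Point} {l : Line} (h : ¬ G.Inc P l) :
    (∀ m : Line, G.Inc P m → G.Perp m l) ∨ (∃! m : Line, G.Inc P m ∧ G.Perp m l) := by
  classical
  by_cases hp : ∃ g g' : Line, g ≠ g' ∧ G.Inc P g ∧ G.Inc P g' ∧ G.Perp g l ∧ G.Perp g' l
  · left
    obtain ⟨g, g', hgg', hPg, hPg', hgl, hg'l⟩ := hp
    intro m hPm
    by_contra hml
    -- feet of the two perpendiculars
    obtain ⟨Gp, hGg, hGl⟩ := G.b2 g l hgl
    obtain ⟨Hp, hHg', hHl⟩ := G.b2 g' l hg'l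
    have hPG : P ≠ Gp := fun e => h (e ▸ hGl)
    have hPH : P ≠ Hp := fun e => h (e ▸ hHl)
    have hGH : Gp ≠ Hp := by
      intro e; subst e
      exact hgg' (G.aStar P Gp hPG g g' hPg hGg hPg' hHg')
    -- the foot map E : points of m → points of l
    have hEex : ∀ Q : {Q : Point // G.Inc Q m},
        ∃ X : Point, ∃ k : Line, G.Inc Q.1 k ∧ G.Perp k l ∧ G.Inc X k ∧ G.Inc X l := by
      rintro ⟨Q, -⟩
      obtain ⟨k, hQk, hkl⟩ := G.b3 Q l
      obtain ⟨X, hXl, hXk⟩ := G.b2 l k (G.b1 k l hkl)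
      exact ⟨X, k, hQk, hkl, hXk, hXl⟩
    choose E k hQk hkl hXk hXl using hEex
    set E' : {Q : Point // G.Inc Q m} → {X : Point // G.Inc X l} :=
      fun Q => ⟨E Q, hXl Q⟩ with hE'
    have hEinj : Function.Injective E' := by
      intro Q₁ Q₂ heq
      have hval : E Q₁ = E Q₂ := congrArg Subtype.val heq
      obtain ⟨u, -, hku⟩ := G.b4 (E Q₁) l (hXl Q₁)
      have hk1 : k Q₁ = k Q₂ := by
        rw [hku (k Q₁) ⟨hXk Q₁, hkl Q₁⟩, hku (k Q₂) ⟨hval ▸ hXk Q₂, hkl Q₂⟩]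
      by_contra hne
      have hne' : Q₁.1 ≠ Q₂.1 := fun e => hne (Subtype.ext e)
      have : m = k Q₁ :=
        G.aStar Q₁.1 Q₂.1 hne' m (k Q₁) Q₁.2 Q₂.2 (hQk Q₁) (hk1 ▸ hQk Q₂)
      exact hml (this ▸ hkl Q₁)
    -- the foot map F : points of l → points of m
    have hFex : ∀ X : {X : Point // G.Inc X l},
        ∃ Q : Point, ∃ k : Line, G.Inc X.1 k ∧ G.Perp k m ∧ G.Inc Q k ∧ G.Inc Q m := by
      rintro ⟨X, -⟩
      obtain ⟨k, hXk, hkm⟩ := G.b3 X m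
      obtain ⟨Q, hQm, hQk⟩ := G.b2 m k (G.b1 k m hkm)
      exact ⟨Q, k, hXk, hkm, hQk, hQm⟩
    choose F k2 hXk2 hk2m hQk2 hQm2 using hFex
    set F' : {X : Point // G.Inc X l} → {Q : Point // G.Inc Q m} :=
      fun X => ⟨F X, hQm2 X⟩ with hF'
    have hFinj : Function.Injective F' := by
      intro X₁ X₂ heq
      have hval : F X₁ = F X₂ := congrArg Subtype.val heq
      obtain ⟨u, -, hku⟩ := G.b4 (F X₁) m (hQm2 X₁)
      have hk1 : k2 X₁ = k2 X₂ := by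
        rw [hku (k2 X₁) ⟨hQk2 X₁, hk2m X₁⟩, hku (k2 X₂) ⟨hval ▸ hQk2 X₂, hk2m X₂⟩]
      by_contra hne
      have hne' : X₁.1 ≠ X₂.1 := fun e => hne (Subtype.ext e)
      have : l = k2 X₁ :=
        G.aStar X₁.1 X₂.1 hne' l (k2 X₁) X₁.2 X₂.2 (hXk2 X₁) (hk1 ▸ hXk2 X₂)
      exact hml (G.b1 l m (this ▸ hk2m X₁))
    -- counting: E' is bijective
    have hcard : Fintype.card {Q : Point // G.Inc Q m} = Fintype.card {X : Point // G.Inc X l} :=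
      le_antisymm (Fintype.card_le_of_injective E' hEinj)
        (Fintype.card_le_of_injective F' hFinj)
    have hsurj : Function.Surjective E' :=
      ((Fintype.bijective_iff_injective_and_card E').mpr ⟨hEinj, hcard⟩).2
    -- pull back the two feet
    obtain ⟨QG, hQG⟩ := hsurj ⟨Gp, hGl⟩
    obtain ⟨QH, hQH⟩ := hsurj ⟨Hp, hHl⟩
    have hEG : E QG = Gp := congrArg Subtype.val hQG
    have hEH : E QH = Hp := congrArg Subtype.val hQH
    obtain ⟨uG, -, huG⟩ := G.b4 Gp l hGl
    obtain ⟨uH, -, huH⟩ := G.b4 Hp l hHl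
    have hkG : k QG = g :=
      (huG (k QG) ⟨hEG ▸ hXk QG, hkl QG⟩).trans (huG g ⟨hGg, hgl⟩).symm
    have hkH : k QH = g' :=
      (huH (k QH) ⟨hEH ▸ hXk QH, hkl QH⟩).trans (huH g' ⟨hHg', hg'l⟩).symm
    have hQGP : QG.1 = P := by
      by_contra hne
      have : m = g := G.aStar QG.1 P hne m g QG.2 hPm (hkG ▸ hQk QG) hPg
      exact hml (this ▸ hgl)
    have hQHP : QH.1 = P := by
      by_contra hne
      have : m = g' := G.aStar QH.1 P hne m g' QH.2 hPm (hkH ▸ hQk QH) hPg'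
      exact hml (this ▸ hg'l)
    have : QG = QH := Subtype.ext (hQGP.trans hQHP.symm)
    exact hGH (hEG ▸ hEH ▸ congrArg E this)
  · right
    obtain ⟨m, hPm, hml⟩ := G.b3 P l
    refine ⟨m, ⟨hPm, hml⟩, ?_⟩
    rintro m' ⟨hPm', hm'l⟩
    by_contra hne
    exact hp ⟨m', m, hne, hPm', hPm, hm'l, hml⟩
end

section
/- In a finite partial Sherk plane, let P and Q be distinct points such that P is not a pole of any line incident with Q, and Q is not a pole of any line incident with P. Then P and Q are incident with the same number of lines. -/
/-- If `X` is not a pole of `l`, there is a unique perpendicular to `l` through `X`. -/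
lemma PartialSherkPlane.uniquePerp {Point Line : Type*} (G : PartialSherkPlane Point Line)
    (X : Point) (l : Line) (h : ¬ G.IsPole X l) :
    ∃ m : Line, (G.Inc X m ∧ G.Perp m l) ∧ ∀ n, G.Inc X n ∧ G.Perp n l → n = m := by
  obtain ⟨m, hm1, hm2⟩ := G.b3 X l
  refine ⟨m, ⟨hm1, hm2⟩, ?_⟩
  rintro n ⟨hn1, hn2⟩
  by_cases hXl : G.Inc X l
  · obtain ⟨u, _, huu⟩ := G.b4 X l hXl
    rw [huu n ⟨hn1, hn2⟩, huu m ⟨hm1, hm2⟩]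
  · by_contra hne
    exact h ⟨hXl, n, m, hne, hn1, hm1, hn2, hm2⟩

theorem stmt_10 {Point Line : Type*} [Fintype Point] [Fintype Line]
    (G : PartialSherkPlane Point Line) {P Q : Point} (hPQ : P ≠ Q)
    (h1 : ∀ m : Line, G.Inc Q m → ¬ G.IsPole P m)
    (h2 : ∀ m : Line, G.Inc P m → ¬ G.IsPole Q m) :
    Nat.card {l : Line // G.Inc P l} = Nat.card {l : Line // G.Inc Q l} := by
  classical
  have hP := fun l : {l : Line // G.Inc Q l} => G.uniquePerp P l.1 (h1 l.1 l.2)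
  have hQ := fun l : {l : Line // G.Inc P l} => G.uniquePerp Q l.1 (h2 l.1 l.2)
  choose f hf hf3 using hP
  choose g hg hg3 using hQ
  refine Nat.card_congr ⟨fun l => ⟨g l, (hg l).1⟩, fun l => ⟨f l, (hf l).1⟩, ?_, ?_⟩
  · intro l
    exact Subtype.ext ((hf3 ⟨g l, (hg l).1⟩ l.1 ⟨l.2, G.b1 _ _ (hg l).2⟩).symm)
  · intro l
    exact Subtype.ext ((hg3 ⟨f l, (hf l).1⟩ l.1 ⟨l.2, G.b1 _ _ (hf l).2⟩).symm)
end

section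
/- In a finite partial Sherk plane, let P and Q be distinct points on a line ℓ, and let m_P and m_Q be the unique perpendiculars to ℓ at P and Q respectively. If m_P and m_Q are not perpendicular to each other, then P and Q are incident with the same number of lines. -/
/-- The number of perpendiculars to a line is at most the number of points on it. -/
lemma PartialSherkPlane.perps_le_points {Point Line : Type*} [Fintype Point] [Fintype Line]
    (G : PartialSherkPlane Point Line) (m : Line) :
    Nat.card {v : Line // G.Perp v m} ≤ Nat.card {X : Point // G.Inc X m} := by
  have hex : ∀ v : {v : Line // G.Perp v m}, ∃ X : Point, G.Inc X v.1 ∧ G.Inc X m :=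
    fun v => G.b2 _ _ v.2
  choose ft h1 h2 using hex
  apply Nat.card_le_card_of_injective (fun v => (⟨ft v, h2 v⟩ : {X : Point // G.Inc X m}))
  intro v1 v2 hv
  simp only [Subtype.mk.injEq] at hv
  obtain ⟨w, hw, huniq⟩ := G.b4 (ft v1) m (h2 v1)
  have e1 : v1.1 = w := huniq v1.1 ⟨h1 v1, v1.2⟩
  have e2 : v2.1 = w := huniq v2.1 ⟨by rw [hv]; exact h1 v2, v2.2⟩
  exact Subtype.ext (e1.trans e2.symm)

/-- If two distinct perpendiculars to `n` pass through `A`, then every line through `A`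
is perpendicular to `n`. -/
lemma PartialSherkPlane.pole_perp {Point Line : Type*} [Fintype Point] [Fintype Line]
    (G : PartialSherkPlane Point Line) {A : Point} {p1 p2 n k : Line}
    (h12 : p1 ≠ p2) (hA1 : G.Inc A p1) (hA2 : G.Inc A p2)
    (h1n : G.Perp p1 n) (h2n : G.Perp p2 n) (hAk : G.Inc A k) : G.Perp k n := by
  by_contra hkn
  have hnk : ¬ G.Perp n k := fun h => hkn (G.b1 _ _ h)
  -- step 1 : points on n inject into perpendiculars of k
  have step1 : Nat.card {X : Point // G.Inc X n} ≤ Nat.card {v : Line // G.Perp v k} := by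
    have hex : ∀ X : {X : Point // G.Inc X n}, ∃ v : Line, G.Inc X.1 v ∧ G.Perp v k :=
      fun X => G.b3 X.1 k
    choose v hv1 hv2 using hex
    apply Nat.card_le_card_of_injective (fun X => (⟨v X, hv2 X⟩ : {v : Line // G.Perp v k}))
    intro X1 X2 h
    simp only [Subtype.mk.injEq] at h
    by_contra hne
    have hXne : X1.1 ≠ X2.1 := fun e => hne (Subtype.ext e)
    have hvn : v X1 = n :=
      G.aStar X1.1 X2.1 hXne (v X1) n (hv1 X1) (by rw [h]; exact hv1 X2) X1.2 X2.2
    exact hnk (hvn ▸ hv2 X1)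
  -- step 3 : points on k plus one more inject into perpendiculars of n
  have step3 : Nat.card {Y : Point // G.Inc Y k} + 1 ≤ Nat.card {w : Line // G.Perp w n} := by
    choose u hu1 hu2 using (fun Y : Point => G.b3 Y n)
    obtain ⟨p', hp'A, hp'n, hp'ne⟩ :
        ∃ p' : Line, G.Inc A p' ∧ G.Perp p' n ∧ p' ≠ u A := by
      by_cases hpA : u A = p1
      · exact ⟨p2, hA2, h2n, by rw [hpA]; exact h12.symm⟩
      · exact ⟨p1, hA1, h1n, fun e => hpA e.symm⟩
    have key : Nat.card ({Y : Point // G.Inc Y k} ⊕ Unit)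
        ≤ Nat.card {w : Line // G.Perp w n} := by
      apply Nat.card_le_card_of_injective
        (fun s => Sum.elim
          (fun Y : {Y : Point // G.Inc Y k} => (⟨u Y.1, hu2 Y.1⟩ : {w : Line // G.Perp w n}))
          (fun _ => (⟨p', hp'n⟩ : {w : Line // G.Perp w n})) s)
      rintro (Y1 | u1) (Y2 | u2) h <;> simp only [Sum.elim_inl, Sum.elim_inr,
        Subtype.mk.injEq] at h
      · -- both points
        have : Y1 = Y2 := by
          by_contra hne
          have hYne : Y1.1 ≠ Y2.1 := fun e => hne (Subtype.ext e)
          have huk : u Y1.1 = k :=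
            G.aStar Y1.1 Y2.1 hYne (u Y1.1) k (hu1 Y1.1) (by rw [h]; exact hu1 Y2.1) Y1.2 Y2.2
          exact absurd (huk ▸ hu2 Y1.1) hkn
        rw [this]
      · -- point vs extra
        exfalso
        by_cases hYA : Y1.1 = A
        · exact hp'ne (by rw [← hYA]; exact h.symm)
        · have huk : u Y1.1 = k :=
            G.aStar Y1.1 A hYA (u Y1.1) k (hu1 Y1.1) (h ▸ hp'A) Y1.2 hAk
          exact hkn (huk ▸ hu2 Y1.1)
      · exfalso
        by_cases hYA : Y2.1 = A
        · exact hp'ne (by rw [← hYA, h])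
        · have huk : u Y2.1 = k :=
            G.aStar Y2.1 A hYA (u Y2.1) k (hu1 Y2.1) (h ▸ hp'A) Y2.2 hAk
          exact hkn (huk ▸ hu2 Y2.1)
      · exact congrArg Sum.inr (Subsingleton.elim u1 u2)
    rw [Nat.card_sum] at key
    simpa using key
  have c1 := G.perps_le_points n
  have c2 := G.perps_le_points k
  omega

/-- Under the hypotheses of the main theorem, there is a unique perpendicular
through `Q` to any line through `P`. -/
lemma PartialSherkPlane.existsUnique_perp {Point Line : Type*} [Fintype Point] [Fintype Line]
    (G : PartialSherkPlane Point Line) {P Q : Point} {l mP mQ : Line} (hPQ : P ≠ Q)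
    (hPl : G.Inc P l) (hQl : G.Inc Q l)
    (hmP : G.Inc P mP ∧ G.Perp mP l) (hmQ : G.Inc Q mQ ∧ G.Perp mQ l)
    (hnp : ¬ G.Perp mP mQ) :
    ∀ g : Line, G.Inc P g → ∃! h : Line, G.Inc Q h ∧ G.Perp h g := by
  intro g hPg
  obtain ⟨h0, hh0⟩ := G.b3 Q g
  refine ⟨h0, hh0, fun y hy => ?_⟩
  by_contra hne
  by_cases hQg : G.Inc Q g
  · have hgl : g = l := G.aStar P Q hPQ g l hPg hQg hPl hQl
    subst hgl
    obtain ⟨w, hw, hu⟩ := G.b4 Q g hQg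
    exact hne ((hu y hy).trans (hu h0 hh0).symm)
  · -- y and h0 are two distinct perpendiculars to g through Q
    have hlg : G.Perp l g := G.pole_perp hne hy.1 hh0.1 hy.2 hh0.2 hQl
    have hgl : G.Perp g l := G.b1 _ _ hlg
    obtain ⟨w, hw, hu⟩ := G.b4 P l hPl
    have e1 : g = w := hu g ⟨hPg, hgl⟩
    have e2 : mP = w := hu mP hmP
    have hmQg : G.Perp mQ g := G.pole_perp hne hy.1 hh0.1 hy.2 hh0.2 hmQ.1
    rw [e1.trans e2.symm] at hmQg
    exact hnp (G.b1 _ _ hmQg)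

theorem stmt_11 {Point Line : Type*} [Fintype Point] [Fintype Line]
    (G : PartialSherkPlane Point Line) {P Q : Point} {l mP mQ : Line} (hPQ : P ≠ Q)
    (hPl : G.Inc P l) (hQl : G.Inc Q l)
    (hmP : G.Inc P mP ∧ G.Perp mP l) (hmQ : G.Inc Q mQ ∧ G.Perp mQ l)
    (hnp : ¬ G.Perp mP mQ) :
    Nat.card {g : Line // G.Inc P g} = Nat.card {g : Line // G.Inc Q g} := by
  have hnp' : ¬ G.Perp mQ mP := fun h => hnp (G.b1 _ _ h)
  have H1 := G.existsUnique_perp hPQ hPl hQl hmP hmQ hnp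
  have H2 := G.existsUnique_perp hPQ.symm hQl hPl hmQ hmP hnp'
  choose f hf hfu using H1
  choose e he heu using H2
  have inj1 : Function.Injective
      (fun g : {g : Line // G.Inc P g} => (⟨f g.1 g.2, (hf g.1 g.2).1⟩ : {h : Line // G.Inc Q h})) := by
    intro g1 g2 h
    simp only [Subtype.mk.injEq] at h
    have hQw : G.Inc Q (f g1.1 g1.2) := (hf g1.1 g1.2).1
    have e1 : g1.1 = e (f g1.1 g1.2) hQw :=
      heu (f g1.1 g1.2) hQw g1.1 ⟨g1.2, G.b1 _ _ (hf g1.1 g1.2).2⟩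
    have e2 : g2.1 = e (f g1.1 g1.2) hQw :=
      heu (f g1.1 g1.2) hQw g2.1 ⟨g2.2, G.b1 _ _ (by rw [h]; exact (hf g2.1 g2.2).2)⟩
    exact Subtype.ext (e1.trans e2.symm)
  have inj2 : Function.Injective
      (fun h : {h : Line // G.Inc Q h} => (⟨e h.1 h.2, (he h.1 h.2).1⟩ : {g : Line // G.Inc P g})) := by
    intro g1 g2 h
    simp only [Subtype.mk.injEq] at h
    have hPw : G.Inc P (e g1.1 g1.2) := (he g1.1 g1.2).1
    have e1 : g1.1 = f (e g1.1 g1.2) hPw :=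
      hfu (e g1.1 g1.2) hPw g1.1 ⟨g1.2, G.b1 _ _ (he g1.1 g1.2).2⟩
    have e2 : g2.1 = f (e g1.1 g1.2) hPw :=
      hfu (e g1.1 g1.2) hPw g2.1 ⟨g2.2, G.b1 _ _ (by rw [h]; exact (he g2.1 g2.2).2)⟩
    exact Subtype.ext (e1.trans e2.symm)
  exact le_antisymm (Nat.card_le_card_of_injective _ inj1) (Nat.card_le_card_of_injective _ inj2)
end

section
/- In a finite partial Sherk plane in which some line is incident only with thick points, every point is thick (incident with at least three lines). -/
theorem stmt_12 {Point Line : Type*} [Fintype Point] [Fintype Line]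
    (G : PartialSherkPlane Point Line)
    (hthick : ∃ l : Line, ∀ P : Point, G.Inc P l → 3 ≤ Nat.card {m : Line // G.Inc P m}) :
    ∀ P : Point, 3 ≤ Nat.card {m : Line // G.Inc P m} := by
  classical
  obtain ⟨l, hl⟩ := hthick
  intro P
  by_contra hP
  have hPl : ¬ G.Inc P l := fun h => hP (hl P h)
  -- uniqueness of perpendiculars at a point of a line
  have uniq : ∀ (X : Point) (w k k' : Line), G.Inc X w → G.Inc X k → G.Perp k w →
      G.Inc X k' → G.Perp k' w → k = k' := by
    intro X w k k' hXw hXk hk hXk' hk'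
    obtain ⟨j, -, hju⟩ := G.b4 X w hXw
    exact (hju k ⟨hXk, hk⟩).trans (hju k' ⟨hXk', hk'⟩).symm
  -- two non-perpendicular lines have comparable point counts
  have lemE : ∀ u w : Line, ¬ G.Perp u w →
      Nat.card {R : Point // G.Inc R u} ≤ Nat.card {R : Point // G.Inc R w} := by
    intro u w huw
    have hex : ∀ M : {R : Point // G.Inc R u}, ∃ F : {R : Point // G.Inc R w},
        ∃ e : Line, G.Inc M.1 e ∧ G.Perp e w ∧ G.Inc F.1 e := by
      intro M
      obtain ⟨e, hMe, hew⟩ := G.b3 M.1 w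
      obtain ⟨F, hFe, hFw⟩ := G.b2 e w hew
      exact ⟨⟨F, hFw⟩, e, hMe, hew, hFe⟩
    choose f e h1 h2 h3 using hex
    refine Nat.card_le_card_of_injective f ?_
    intro M M' hMM'
    by_contra hne
    have hMne : M.1 ≠ M'.1 := fun hh => hne (Subtype.ext hh)
    have hee : e M = e M' := by
      have h3' : G.Inc (f M).1 (e M') := by rw [hMM']; exact h3 M'
      exact uniq (f M).1 w (e M) (e M') (f M).2 (h3 M) (h2 M) h3' (h2 M')
    have heu : e M = u :=
      G.aStar M.1 M'.1 hMne (e M) u (h1 M) (by rw [hee]; exact h1 M') M.2 M'.2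
    exact huw (heu ▸ h2 M)
  -- drop perpendicular from P to l
  obtain ⟨m, hPm, hml⟩ := G.b3 P l
  obtain ⟨A, hAm, hAl⟩ := G.b2 m l hml
  have hmm : ¬ G.Perp m m := by
    intro h
    have hlm : l = m := uniq A m l m hAm hAl (G.b1 m l hml) hAm h
    exact hPl (by rw [hlm]; exact hPm)
  obtain ⟨n, hPn, hnm⟩ := G.b3 P m
  have hnem : n ≠ m := fun h => hmm (h ▸ hnm)
  -- thinness of P
  have thin : ∀ k, G.Inc P k → k = m ∨ k = n := by
    intro k hk
    by_contra hc
    push_neg at hc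
    apply hP
    have hmn : m ≠ n := fun h => hnem h.symm
    letI := Fintype.ofFinite {x : Line // G.Inc P x}
    have h2lt : 2 < Fintype.card {x : Line // G.Inc P x} :=
      Fintype.two_lt_card_iff.mpr ⟨⟨m, hPm⟩, ⟨n, hPn⟩, ⟨k, hk⟩,
        fun h => hmn (Subtype.ext_iff.mp h),
        fun h => hc.1 (Subtype.ext_iff.mp h).symm,
        fun h => hc.2 (Subtype.ext_iff.mp h).symm⟩
    rw [Nat.card_eq_fintype_card]
    omega
  have hstar : ∀ k : Line, G.Perp m k ∨ G.Perp n k := by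
    intro k
    obtain ⟨e, hPe, hek⟩ := G.b3 P k
    rcases thin e hPe with rfl | rfl
    · exact Or.inl hek
    · exact Or.inr hek
  -- a thick point has a line avoiding two given lines
  have third : ∀ (R : Point), 3 ≤ Nat.card {k : Line // G.Inc R k} →
      ∀ x y : Line, ∃ t, G.Inc R t ∧ t ≠ x ∧ t ≠ y := by
    intro R hR x y
    by_contra hc
    push_neg at hc
    have hinj : Function.Injective (fun k : {k : Line // G.Inc R k} =>
        if k.1 = x then true else false) := by
      intro k k' hkk'
      by_cases h1 : k.1 = x <;> by_cases h2 : k'.1 = x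
      · exact Subtype.ext (h1.trans h2.symm)
      · simp [h1, h2] at hkk'
      · simp [h1, h2] at hkk'
      · exact Subtype.ext ((hc k.1 k.2 h1).trans (hc k'.1 k'.2 h2).symm)
    have h2 := Nat.card_le_card_of_injective _ hinj
    have hb : Nat.card Bool = 2 := by simp [Nat.card_eq_fintype_card]
    rw [hb] at h2
    omega
  -- third line t at A
  obtain ⟨t, hAt, htl, htm⟩ := third A (hl A hAl) l m
  have hPtl : ¬ G.Perp t l := fun h => htm (uniq A l t m hAl hAt h hAm hml)
  have hPtm : ¬ G.Perp t m := fun h => htl (uniq A m t l hAm hAt h hAl (G.b1 m l hml))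
  -- |m| = |l|
  have hac : Nat.card {R : Point // G.Inc R m} = Nat.card {R : Point // G.Inc R l} := by
    have e1 : Nat.card {R : Point // G.Inc R m} = Nat.card {R : Point // G.Inc R t} :=
      le_antisymm (lemE m t fun h => hPtm (G.b1 m t h)) (lemE t m hPtm)
    have e2 : Nat.card {R : Point // G.Inc R t} = Nat.card {R : Point // G.Inc R l} :=
      le_antisymm (lemE t l hPtl) (lemE l t fun h => hPtl (G.b1 l t h))
    exact e1.trans e2
  -- |n| = |l|
  have hbc : Nat.card {R : Point // G.Inc R n} = Nat.card {R : Point // G.Inc R l} := by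
    by_cases hnl : G.Perp n l
    · obtain ⟨C, hCn, hCl⟩ := G.b2 n l hnl
      obtain ⟨r, hCr, hrl, hrn⟩ := third C (hl C hCl) l n
      have h1 : ¬ G.Perp r n := fun h => hrl (uniq C n r l hCn hCr h hCl (G.b1 n l hnl))
      have h2 : ¬ G.Perp r l := fun h => hrn (uniq C l r n hCl hCr h hCn hnl)
      have e1 : Nat.card {R : Point // G.Inc R n} = Nat.card {R : Point // G.Inc R r} :=
        le_antisymm (lemE n r fun h => h1 (G.b1 n r h)) (lemE r n h1)
      have e2 : Nat.card {R : Point // G.Inc R r} = Nat.card {R : Point // G.Inc R l} :=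
        le_antisymm (lemE r l h2) (lemE l r fun h => h2 (G.b1 l r h))
      exact e1.trans e2
    · exact le_antisymm (lemE n l hnl) (lemE l n fun h => hnl (G.b1 l n h))
  -- two lines (other than l) through each point of l
  have hWex : ∀ Q : {Q : Point // G.Inc Q l}, ∃ k₁ k₂ : {k : Line // k ≠ l},
      k₁ ≠ k₂ ∧ G.Inc Q.1 k₁.1 ∧ G.Inc Q.1 k₂.1 := by
    intro Q
    obtain ⟨k₁, hk1, hk1l, -⟩ := third Q.1 (hl Q.1 Q.2) l l
    obtain ⟨k₂, hk2, hk2l, hk2k1⟩ := third Q.1 (hl Q.1 Q.2) l k₁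
    refine ⟨⟨k₁, hk1l⟩, ⟨k₂, hk2l⟩, ?_, hk1, hk2⟩
    intro h
    exact hk2k1 (Subtype.ext_iff.mp h).symm
  choose g1 g2 hg hIa hIb using hWex
  -- map each line ≠ l to a foot on m (≠ A) or a foot on n
  have hPhiex : ∀ k : {k : Line // k ≠ l},
      ∃ x : {M : Point // G.Inc M m ∧ M ≠ A} ⊕ {N : Point // G.Inc N n},
        Sum.elim (fun M => G.Inc M.1 k.1 ∧ G.Perp k.1 m)
                 (fun N => G.Inc N.1 k.1 ∧ G.Perp k.1 n) x := by
    intro k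
    rcases hstar k.1 with h | h
    · have hkm : G.Perp k.1 m := G.b1 m k.1 h
      obtain ⟨F, hFk, hFm⟩ := G.b2 k.1 m hkm
      have hFA : F ≠ A := by
        intro hFA
        subst hFA
        exact k.2 (uniq F m k.1 l hFm hFk hkm hAl (G.b1 m l hml))
      exact ⟨Sum.inl ⟨F, hFm, hFA⟩, hFk, hkm⟩
    · have hkn : G.Perp k.1 n := G.b1 n k.1 h
      obtain ⟨F, hFk, hFn⟩ := G.b2 k.1 n hkn
      exact ⟨Sum.inr ⟨F, hFn⟩, hFk, hkn⟩
  choose Phi hPhi using hPhiex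
  have hPhiinj : Function.Injective Phi := by
    intro k k' h
    have s1 := hPhi k
    have s2 := hPhi k'
    rw [h] at s1
    cases hx : Phi k' with
    | inl M =>
      rw [hx] at s1 s2
      simp only [Sum.elim_inl] at s1 s2
      exact Subtype.ext (uniq M.1 m k.1 k'.1 M.2.1 s1.1 s1.2 s2.1 s2.2)
    | inr N =>
      rw [hx] at s1 s2
      simp only [Sum.elim_inr] at s1 s2
      exact Subtype.ext (uniq N.1 n k.1 k'.1 N.2 s1.1 s1.2 s2.1 s2.2)
  -- the combined injection
  have hWinj : Function.Injective (fun x : {Q : Point // G.Inc Q l} × Bool =>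
      if x.2 = true then g1 x.1 else g2 x.1) := by
    rintro ⟨Q, i⟩ ⟨Q', j⟩ h
    simp only at h
    have hQQ : Q = Q' := by
      by_contra hne
      have hne' : Q.1 ≠ Q'.1 := fun hh => hne (Subtype.ext hh)
      set k : {k : Line // k ≠ l} := if i = true then g1 Q else g2 Q with hk
      have hIncQ : G.Inc Q.1 k.1 := by
        rw [hk]; cases i
        · simpa using hIb Q
        · simpa using hIa Q
      have hIncQ' : G.Inc Q'.1 k.1 := by
        rw [h]; cases j
        · simpa using hIb Q'
        · simpa using hIa Q'
      exact k.2 (G.aStar Q.1 Q'.1 hne' k.1 l hIncQ hIncQ' Q.2 Q'.2)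
    subst hQQ
    cases i <;> cases j
    · rfl
    · exfalso; simp only [if_true, if_false] at h
      exact hg Q (h.symm)
    · exfalso; simp only [if_true, if_false] at h
      exact hg Q h
    · rfl
  have hcard1 : Nat.card ({Q : Point // G.Inc Q l} × Bool)
      ≤ Nat.card ({M : Point // G.Inc M m ∧ M ≠ A} ⊕ {N : Point // G.Inc N n}) :=
    Nat.card_le_card_of_injective _ (hPhiinj.comp hWinj)
  have e1 : Nat.card ({Q : Point // G.Inc Q l} × Bool)
      = Nat.card {Q : Point // G.Inc Q l} * 2 := by
    rw [Nat.card_prod]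
    congr 1
    simp [Nat.card_eq_fintype_card]
  have e2 : Nat.card ({M : Point // G.Inc M m ∧ M ≠ A} ⊕ {N : Point // G.Inc N n})
      = Nat.card {M : Point // G.Inc M m ∧ M ≠ A} + Nat.card {N : Point // G.Inc N n} :=
    Nat.card_sum
  -- |m \ {A}| + 1 ≤ |m|
  have hX : Nat.card {M : Point // G.Inc M m ∧ M ≠ A} + 1
      ≤ Nat.card {M : Point // G.Inc M m} := by
    have hinj : Function.Injective (fun o : Option {M : Point // G.Inc M m ∧ M ≠ A} =>
        (Option.elim o ⟨A, hAm⟩ (fun M => ⟨M.1, M.2.1⟩) : {M : Point // G.Inc M m})) := by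
      intro o o' hoo
      cases o with
      | none =>
        cases o' with
        | none => rfl
        | some M =>
          exfalso
          simp only [Option.elim_none, Option.elim_some] at hoo
          exact M.2.2 (Subtype.ext_iff.mp hoo).symm
      | some M =>
        cases o' with
        | none =>
          exfalso
          simp only [Option.elim_none, Option.elim_some] at hoo
          exact M.2.2 (Subtype.ext_iff.mp hoo)
        | some M' =>
          simp only [Option.elim_none, Option.elim_some] at hoo
          simp only [Subtype.mk.injEq] at hoo
          exact congrArg some (Subtype.ext hoo)
    have hle := Nat.card_le_card_of_injective _ hinj
    have ho : Nat.card (Option {M : Point // G.Inc M m ∧ M ≠ A})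
        = Nat.card {M : Point // G.Inc M m ∧ M ≠ A} + 1 := by
      simp [Nat.card_eq_fintype_card]
    rw [ho] at hle
    exact hle
  rw [e1, e2] at hcard1
  rw [hac] at hX
  rw [hbc] at hcard1
  omega
end

section
/- In a finite partial Sherk plane in which some line is incident only with thick points, all lines are incident with the same number of points. -/
namespace SherkAux

variable {Point Line : Type*}

/-- Perpendicularity is irreflexive (uses B5). -/
lemma perp_irrefl (G : PartialSherkPlane Point Line) (g : Line) : ¬ G.Perp g g := by
  intro hgg
  -- every line perpendicular to g equals g
  have h0a : ∀ m, G.Perp m g → m = g := by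
    intro m hm
    obtain ⟨F, hFm, hFg⟩ := G.b2 m g hm
    obtain ⟨u, _, huniq⟩ := G.b4 F g hFg
    have h1 := huniq m ⟨hFm, hm⟩
    have h2 := huniq g ⟨hFg, hgg⟩
    rw [h1, h2]
  -- every point is on g
  have h0b : ∀ P, G.Inc P g := by
    intro P
    obtain ⟨m, hPm, hmg⟩ := G.b3 P g
    rwa [h0a m hmg] at hPm
  obtain ⟨x, y, z, hxy, hxz, hyz, hconc⟩ := G.b5
  obtain ⟨Q, hQx, hQy⟩ := G.b2 x y hxy
  obtain ⟨m, hQm, hmz⟩ := G.b3 Q z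
  obtain ⟨S, hSm, hSz⟩ := G.b2 m z hmz
  by_cases hx : x = g
  · -- then also y = g, and S gives concurrency
    have hyx : G.Perp y x := G.b1 x y hxy
    have hyg : y = g := h0a y (hx ▸ hyx)
    exact hconc ⟨S, by rw [hx]; exact h0b S, by rw [hyg]; exact h0b S, hSz⟩
  by_cases hy : y = g
  · exact hx (h0a x (hy ▸ hxy))
  -- x ≠ g, y ≠ g : each of x, y has Q as its only point
  have hQz : ¬ G.Inc Q z := fun h => hconc ⟨Q, hQx, hQy, h⟩
  have hxpts : ∀ P, G.Inc P x → P = Q := by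
    intro P hPx
    by_contra hPQ
    exact hx (G.aStar P Q hPQ x g hPx hQx (h0b P) (h0b Q))
  obtain ⟨m', hSm', hm'x⟩ := G.b3 S x
  obtain ⟨T, hTm', hTx⟩ := G.b2 m' x hm'x
  have hTQ : T = Q := hxpts T hTx
  obtain ⟨u, _, huniq⟩ := G.b4 Q x hQx
  have h1 : m' = u := huniq m' ⟨hTQ ▸ hTm', hm'x⟩
  have h2 : y = u := huniq y ⟨hQy, G.b1 x y hxy⟩
  have hSy : G.Inc S y := (h1.trans h2.symm) ▸ hSm'
  have hSQ : S = Q := by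
    by_contra hne
    exact hy (G.aStar S Q hne y g hSy hQy (h0b S) (h0b Q))
  exact hQz (hSQ ▸ hSz)

variable [Fintype Point] [Fintype Line]

/-- Lemma A: the number of perpendiculars to `g` equals the number of points on `g`. -/
lemma card_perp_eq_card_points (G : PartialSherkPlane Point Line) (g : Line) :
    Nat.card {m : Line // G.Perp m g} = Nat.card {P : Point // G.Inc P g} := by
  have hf : ∀ m : {m : Line // G.Perp m g},
      ∃ F : Point, G.Inc F m.1 ∧ G.Inc F g := fun m => G.b2 m.1 g m.2
  choose F hF1 hF2 using hf
  apply Nat.card_eq_of_bijective (fun m => (⟨F m, hF2 m⟩ : {P : Point // G.Inc P g}))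
  constructor
  · -- injective
    rintro ⟨m₁, hm₁⟩ ⟨m₂, hm₂⟩ h
    have hv : F ⟨m₁, hm₁⟩ = F ⟨m₂, hm₂⟩ := congrArg Subtype.val h
    obtain ⟨u, _, huniq⟩ := G.b4 (F ⟨m₁, hm₁⟩) g (hF2 ⟨m₁, hm₁⟩)
    have h1 : m₁ = u := huniq m₁ ⟨hF1 ⟨m₁, hm₁⟩, hm₁⟩
    have h2 : m₂ = u := huniq m₂ ⟨hv ▸ hF1 ⟨m₂, hm₂⟩, hm₂⟩
    exact Subtype.ext (h1.trans h2.symm)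
  · -- surjective
    rintro ⟨P, hP⟩
    obtain ⟨m, ⟨hPm, hmg⟩, _⟩ := G.b4 P g hP
    refine ⟨⟨m, hmg⟩, ?_⟩
    apply Subtype.ext
    show F ⟨m, hmg⟩ = P
    by_contra hne
    have : m = g := G.aStar (F ⟨m, hmg⟩) P hne m g (hF1 ⟨m, hmg⟩) hPm (hF2 ⟨m, hmg⟩) hP
    exact perp_irrefl G g (this ▸ hmg)

/-- If `l ≠ g` and `l` is not perpendicular to `g`, then `l` has at most as many
points as `g`. -/
lemma card_le_of_not_perp (G : PartialSherkPlane Point Line) {l g : Line}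
    (hne : l ≠ g) (hnp : ¬ G.Perp l g) :
    Nat.card {P : Point // G.Inc P l} ≤ Nat.card {P : Point // G.Inc P g} := by
  rw [← card_perp_eq_card_points G g]
  have hf : ∀ P : {P : Point // G.Inc P l}, ∃ m : Line, G.Inc P.1 m ∧ G.Perp m g :=
    fun P => G.b3 P.1 g
  choose f hf1 hf2 using hf
  have hinj : Function.Injective (fun P : {P : Point // G.Inc P l} =>
      (⟨f P, hf2 P⟩ : {m : Line // G.Perp m g})) := by
    rintro ⟨P, hP⟩ ⟨Q, hQ⟩ h
    have hv : f ⟨P, hP⟩ = f ⟨Q, hQ⟩ := congrArg Subtype.val h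
    apply Subtype.ext
    by_contra hPQ
    have : f ⟨P, hP⟩ = l := G.aStar P Q hPQ (f ⟨P, hP⟩) l (hf1 ⟨P, hP⟩)
      (hv ▸ hf1 ⟨Q, hQ⟩) hP hQ
    exact hnp (this ▸ hf2 ⟨P, hP⟩)
  exact Nat.card_le_card_of_injective _ hinj

/-- Two distinct non-perpendicular lines carry the same number of points. -/
lemma card_eq_of_not_perp (G : PartialSherkPlane Point Line) {l g : Line}
    (hne : l ≠ g) (hnp : ¬ G.Perp l g) :
    Nat.card {P : Point // G.Inc P l} = Nat.card {P : Point // G.Inc P g} :=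
  le_antisymm (card_le_of_not_perp G hne hnp)
    (card_le_of_not_perp G (Ne.symm hne) (fun h => hnp (G.b1 g l h)))

end SherkAux

theorem stmt_13 {Point Line : Type*} [Fintype Point] [Fintype Line]
    (G : PartialSherkPlane Point Line)
    (hthick : ∃ l : Line, ∀ P : Point, G.Inc P l → 3 ≤ Nat.card {m : Line // G.Inc P m}) :
    ∀ l m : Line, Nat.card {P : Point // G.Inc P l} = Nat.card {P : Point // G.Inc P m} := by
  obtain ⟨l₀, hl₀⟩ := hthick
  have key : ∀ m : Line,
      Nat.card {P : Point // G.Inc P m} = Nat.card {P : Point // G.Inc P l₀} := by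
    intro m
    by_cases hml : m = l₀
    · rw [hml]
    by_cases hperp : G.Perp m l₀
    · -- m ⊥ l₀ : they meet at a thick point F; take a third line a through F
      obtain ⟨F, hFm, hFl₀⟩ := G.b2 m l₀ hperp
      have hF3 := hl₀ F hFl₀
      -- find a third line through F distinct from l₀ and m
      have hthird : ∃ a : Line, G.Inc F a ∧ a ≠ l₀ ∧ a ≠ m := by
        classical
        by_contra hcon
        push_neg at hcon
        have hinj : Function.Injective (fun h : {h : Line // G.Inc F h} =>
            (if h.1 = l₀ then (0 : Fin 2) else 1)) := by
          rintro ⟨a, ha⟩ ⟨b, hb⟩ hab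
          simp only at hab
          apply Subtype.ext
          show a = b
          by_cases h1 : a = l₀ <;> by_cases h2 : b = l₀
          · rw [h1, h2]
          · simp [h1, h2] at hab
          · simp [h1, h2] at hab
          · exact (hcon a ha h1).trans (hcon b hb h2).symm
        have := Nat.card_le_card_of_injective _ hinj
        simp only [Nat.card_eq_fintype_card, Fintype.card_fin] at this hF3
        omega
      obtain ⟨a, hFa, hal₀, ham⟩ := hthird
      -- a is not perpendicular to l₀ (else it would equal m, by B4 at F on l₀)
      have hnal₀ : ¬ G.Perp a l₀ := by
        intro hp
        obtain ⟨u, _, huniq⟩ := G.b4 F l₀ hFl₀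
        exact ham ((huniq a ⟨hFa, hp⟩).trans (huniq m ⟨hFm, hperp⟩).symm)
      -- a is not perpendicular to m (else it would equal l₀, by B4 at F on m)
      have hnam : ¬ G.Perp a m := by
        intro hp
        obtain ⟨u, _, huniq⟩ := G.b4 F m hFm
        exact hal₀ ((huniq a ⟨hFa, hp⟩).trans
          (huniq l₀ ⟨hFl₀, G.b1 m l₀ hperp⟩).symm)
      calc Nat.card {P : Point // G.Inc P m}
          = Nat.card {P : Point // G.Inc P a} :=
            SherkAux.card_eq_of_not_perp G (Ne.symm ham)
              (fun h => hnam (G.b1 m a h))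
        _ = Nat.card {P : Point // G.Inc P l₀} :=
            SherkAux.card_eq_of_not_perp G hal₀ hnal₀
    · exact SherkAux.card_eq_of_not_perp G hml hperp
  intro l m
  rw [key l, key m]
end

section
/- In a finite partial Sherk plane in which some line is incident only with thick points, with v the total number of points, n the common number of points per line, and r the common number of lines per point, every line has exactly (n² − v)/(r − 1) poles. -/
open Finset

namespace PartialSherkPlane

variable {Point Line : Type*}

/-- Two distinct lines meet in at most one point. -/
lemma meet_unique (G : PartialSherkPlane Point Line) {l m : Line} (hlm : l ≠ m)
    {P Q : Point} (h1 : G.Inc P l) (h2 : G.Inc P m) (h3 : G.Inc Q l) (h4 : G.Inc Q m) :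
    P = Q := by
  by_contra h
  exact hlm (G.aStar P Q h l m h1 h3 h2 h4)

lemma card_filter_eq_nat_card {α : Type*} [Fintype α] (p : α → Prop) [DecidablePred p] :
    (Finset.univ.filter p).card = Nat.card {x // p x} := by
  rw [Nat.card_eq_fintype_card, Fintype.card_subtype]

/-- When `l` is not perpendicular to itself, the perpendiculars to `l` are in bijection
with the points of `l` via their feet. -/
lemma card_perps [Fintype Point] [Fintype Line] (G : PartialSherkPlane Point Line)
    {l : Line} (hl : ¬ G.Perp l l) :
    Nat.card {m : Line // G.Perp m l} = Nat.card {A : Point // G.Inc A l} := by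
  classical
  rw [← card_filter_eq_nat_card, ← card_filter_eq_nat_card]
  apply Finset.card_bij
    (fun m hm => Classical.choose (G.b2 m l (by simpa using hm)))
  · intro m hm
    simp only [mem_filter, mem_univ, true_and]
    exact (Classical.choose_spec (G.b2 m l (by simpa using hm))).2
  · intro m hm m' hm' heq
    have hm2 : G.Perp m l := by simpa using hm
    have hm2' : G.Perp m' l := by simpa using hm'
    obtain ⟨hAm, hAl⟩ := Classical.choose_spec (G.b2 m l (by simpa using hm))
    obtain ⟨hAm', hAl'⟩ := Classical.choose_spec (G.b2 m' l (by simpa using hm'))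
    rw [heq] at hAm
    exact (G.b4 _ l hAl').unique ⟨hAm, hm2⟩ ⟨hAm', hm2'⟩
  · intro A hA
    have hAl : G.Inc A l := by simpa using hA
    obtain ⟨m, ⟨hAm, hml⟩, -⟩ := G.b4 A l hAl
    refine ⟨m, by simpa using hml, ?_⟩
    obtain ⟨hBm, hBl⟩ := Classical.choose_spec (G.b2 m l (by simpa using hml))
    have hmne : m ≠ l := fun h => hl (h ▸ hml)
    exact G.meet_unique hmne hBm hBl hAm hAl

/-- Every line through a pole of `l` is perpendicular to `l`. -/
lemma pole_all_perp [Fintype Point] [Fintype Line] (G : PartialSherkPlane Point Line)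
    {n : ℕ} (hn : ∀ l : Line, Nat.card {P : Point // G.Inc P l} = n)
    {l : Line} (hl : ¬ G.Perp l l) {P : Point} (hP : G.IsPole P l)
    {k : Line} (hk : G.Inc P k) : G.Perp k l := by
  classical
  by_contra hkl
  obtain ⟨hPl, g, h, hgh, hPg, hPh, hgl, hhl⟩ := hP
  -- For each point, choose a perpendicular to `l` through it.
  let F : Point → Line := fun Q => Classical.choose (G.b3 Q l)
  have hF1 : ∀ Q, G.Inc Q (F Q) := fun Q => (Classical.choose_spec (G.b3 Q l)).1
  have hF2 : ∀ Q, G.Perp (F Q) l := fun Q => (Classical.choose_spec (G.b3 Q l)).2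
  have hFk : ∀ Q, F Q ≠ k := fun Q hEq => hkl (hEq ▸ hF2 Q)
  set Kpts : Finset Point := univ.filter (fun Q => G.Inc Q k) with hK
  set Sp : Finset Line := univ.filter (fun m => G.Perp m l) with hS
  have hcard : Sp.card = Kpts.card := by
    rw [hS, hK, card_filter_eq_nat_card, card_filter_eq_nat_card, hn k,
      G.card_perps hl, hn l]
  have hinj : Set.InjOn F Kpts := by
    intro Q hQ Q' hQ' hEq
    have hQk : G.Inc Q k := by simpa [hK] using hQ
    have hQ'k : G.Inc Q' k := by simpa [hK] using hQ'
    have h2 : G.Inc Q' (F Q) := hEq ▸ hF1 Q'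
    exact G.meet_unique (hFk Q) (hF1 Q) hQk h2 hQ'k
  have himg : Kpts.image F = Sp := by
    apply Finset.eq_of_subset_of_card_le
    · intro m hm
      obtain ⟨Q, -, rfl⟩ := mem_image.mp hm
      simp [hS, hF2 Q]
    · rw [Finset.card_image_of_injOn hinj, hcard]
  have hPK : P ∈ Kpts := by simp [hK, hk]
  have hFP : ∀ m : Line, G.Perp m l → G.Inc P m → F P = m := by
    intro m hml hPm
    have hmS : m ∈ Sp := by simp [hS, hml]
    rw [← himg] at hmS
    obtain ⟨Q, hQ, hFQ⟩ := mem_image.mp hmS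
    have hQk : G.Inc Q k := by simpa [hK] using hQ
    have hmk : m ≠ k := fun hEq => hkl (hEq ▸ hml)
    have hQm : G.Inc Q m := hFQ ▸ hF1 Q
    have : Q = P := G.meet_unique hmk hQm hQk hPm hk
    rw [← this, hFQ]
  exact hgh ((hFP g hgl hPg).symm.trans (hFP h hhl hPh))

end PartialSherkPlane

open Finset PartialSherkPlane in
theorem stmt_15 {Point Line : Type*} [Fintype Point] [Fintype Line]
    (G : PartialSherkPlane Point Line)
    (hthick : ∃ l : Line, ∀ P : Point, G.Inc P l → 3 ≤ Nat.card {m : Line // G.Inc P m})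
    (n r : ℕ)
    (hn : ∀ l : Line, Nat.card {P : Point // G.Inc P l} = n)
    (hr : ∀ P : Point, Nat.card {l : Line // G.Inc P l} = r) :
    ∀ l : Line, Nat.card {P : Point // G.IsPole P l} =
      (n ^ 2 - Nat.card Point) / (r - 1) := by
  classical
  intro l
  obtain ⟨x, y, z, hxy, hxz, hyz, hnoP⟩ := G.b5
  obtain ⟨P₀, -, -⟩ := G.b2 x y hxy
  have hn1 : 1 ≤ n := by
    obtain ⟨m, hm, -⟩ := G.b3 P₀ l
    have hpos : 0 < Nat.card {P : Point // G.Inc P m} := @Nat.card_pos _ ⟨⟨P₀, hm⟩⟩ _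
    rw [hn m] at hpos
    omega
  by_cases hll : G.Perp l l
  · -- degenerate case: `l` is perpendicular to itself
    have hperp_eq : ∀ m, G.Perp m l → m = l := by
      intro m hm
      obtain ⟨A, hAm, hAl⟩ := G.b2 m l hm
      exact (G.b4 A l hAl).unique ⟨hAm, hm⟩ ⟨hAl, hll⟩
    have hpole : ∀ P, ¬ G.IsPole P l := by
      rintro P ⟨-, g, h', hgh, -, -, hgl, hhl⟩
      exact hgh ((hperp_eq g hgl).trans (hperp_eq h' hhl).symm)
    have hempty : IsEmpty {P : Point // G.IsPole P l} := ⟨fun ⟨P, hP⟩ => hpole P hP⟩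
    have hcard0 : Nat.card {P : Point // G.IsPole P l} = 0 := @Nat.card_of_isEmpty _ hempty
    have hall : ∀ P : Point, G.Inc P l := by
      intro P
      obtain ⟨m, hPm, hml⟩ := G.b3 P l
      rw [← hperp_eq m hml]
      exact hPm
    have hv : Nat.card Point = n := by
      rw [← hn l]
      exact (Nat.card_congr (Equiv.subtypeUnivEquiv hall)).symm
    have hnle : n ≤ 1 := by
      by_contra hh
      push_neg at hh
      have hline : ∀ m : Line, m = l := by
        intro m
        have h2 : 1 < Fintype.card {P : Point // G.Inc P m} := by
          rw [← Nat.card_eq_fintype_card, hn]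
          omega
        obtain ⟨⟨A, hA⟩, ⟨B, hB⟩, hAB⟩ := Fintype.exists_pair_of_one_lt_card h2
        have hABne : A ≠ B := fun hEq => hAB (Subtype.ext hEq)
        exact G.aStar A B hABne m l hA hB (hall A) (hall B)
      rw [hline x, hline z] at hxz
      rw [hline x, hline y] at hxy
      exact hxz hxy
    rw [hcard0, hv]
    interval_cases n
    simp
  · -- main case
    have hr3 : 3 ≤ r := by
      obtain ⟨l₀, hl₀⟩ := hthick
      have hpos : 0 < Nat.card {P : Point // G.Inc P l₀} := by rw [hn]; omega
      obtain ⟨X, hX⟩ := (Nat.card_pos_iff.mp hpos).1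
      rw [← hr X]
      exact hl₀ X hX
    set Off : Finset Point := univ.filter (fun P => ¬ G.Inc P l) with hOff
    set Poles : Finset Point := univ.filter (fun P => G.IsPole P l) with hPolesDef
    set Sp : Finset Line := univ.filter (fun m => G.Perp m l) with hSpDef
    set I : Finset (Point × Line) :=
      univ.filter (fun w => ¬ G.Inc w.1 l ∧ G.Inc w.1 w.2 ∧ G.Perp w.2 l) with hIdef
    have hSp_card : Sp.card = n := by
      rw [hSpDef, card_filter_eq_nat_card, G.card_perps hll, hn l]
    -- first count of incidences: by lines
    have hI1 : I.card = n * (n - 1) := by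
      have hfibmem : ∀ w ∈ I, w.2 ∈ Sp := by
        intro w hw
        simp only [hIdef, mem_filter, mem_univ, true_and] at hw
        simp [hSpDef, hw.2.2]
      rw [Finset.card_eq_sum_card_fiberwise hfibmem]
      have hfib : ∀ m ∈ Sp, (I.filter (fun w => w.2 = m)).card = n - 1 := by
        intro m hm
        have hml : G.Perp m l := by simpa [hSpDef] using hm
        have hmne : m ≠ l := fun hEq => hll (hEq ▸ hml)
        have hbij : (I.filter (fun w => w.2 = m)).card
            = (univ.filter (fun Q => G.Inc Q m ∧ ¬ G.Inc Q l)).card := by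
          apply Finset.card_bij (fun w _ => w.1)
          · rintro ⟨Q, m'⟩ hw
            rw [mem_filter] at hw
            obtain ⟨hwI, hm'⟩ := hw
            simp only [hIdef, mem_filter, mem_univ, true_and] at hwI
            cases hm'
            simp only [mem_filter, mem_univ, true_and]
            exact ⟨hwI.2.1, hwI.1⟩
          · rintro ⟨Q, m1⟩ hw ⟨Q', m2⟩ hw' hEq
            have h1 : m1 = m := (mem_filter.mp hw).2
            have h2 : m2 = m := (mem_filter.mp hw').2
            rw [h1, h2]
            exact congrArg (fun a => (a, m)) hEq
          · intro Q hQ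
            simp only [mem_filter, mem_univ, true_and] at hQ
            refine ⟨(Q, m), ?_, rfl⟩
            rw [mem_filter]
            constructor
            · simp only [hIdef, mem_filter, mem_univ, true_and]
              exact ⟨hQ.2, hQ.1, hml⟩
            · rfl
        rw [hbij]
        obtain ⟨A, hAm, hAl⟩ := G.b2 m l hml
        have hone : univ.filter (fun Q => G.Inc Q m ∧ G.Inc Q l) = {A} := by
          ext Q
          simp only [mem_filter, mem_univ, true_and, mem_singleton]
          constructor
          · rintro ⟨h1, h2⟩
            exact G.meet_unique hmne h1 h2 hAm hAl
          · rintro rfl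
            exact ⟨hAm, hAl⟩
        have hsplit := Finset.card_filter_add_card_filter_not
          (s := univ.filter (fun Q => G.Inc Q m)) (p := fun Q => G.Inc Q l)
        rw [Finset.filter_filter, Finset.filter_filter] at hsplit
        rw [hone] at hsplit
        have hnm : (univ.filter (fun Q => G.Inc Q m)).card = n := by
          rw [card_filter_eq_nat_card, hn]
        rw [hnm, Finset.card_singleton] at hsplit
        omega
      rw [Finset.sum_congr rfl hfib, Finset.sum_const, smul_eq_mul, hSp_card]
    -- second count of incidences: by points
    have hPolesOff : Poles ⊆ Off := by
      intro P hP
      simp only [hPolesDef, mem_filter, mem_univ, true_and] at hP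
      simp only [hOff, mem_filter, mem_univ, true_and]
      exact hP.1
    have hI2 : I.card = (Off \ Poles).card + Poles.card * r := by
      have hfibmem : ∀ w ∈ I, w.1 ∈ Off := by
        intro w hw
        simp only [hIdef, mem_filter, mem_univ, true_and] at hw
        simp [hOff, hw.1]
      rw [Finset.card_eq_sum_card_fiberwise hfibmem]
      have hfib : ∀ Q ∈ Off, (I.filter (fun w => w.1 = Q)).card
          = (univ.filter (fun m => G.Inc Q m ∧ G.Perp m l)).card := by
        intro Q hQ
        have hQl : ¬ G.Inc Q l := by simpa [hOff] using hQ
        apply Finset.card_bij (fun w _ => w.2)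
        · rintro ⟨Q', m⟩ hw
          rw [mem_filter] at hw
          obtain ⟨hwI, hQ'⟩ := hw
          simp only [hIdef, mem_filter, mem_univ, true_and] at hwI
          cases hQ'
          simp only [mem_filter, mem_univ, true_and]
          exact ⟨hwI.2.1, hwI.2.2⟩
        · rintro ⟨Q1, m1⟩ hw ⟨Q2, m2⟩ hw' hEq
          have h1 : Q1 = Q := (mem_filter.mp hw).2
          have h2 : Q2 = Q := (mem_filter.mp hw').2
          rw [h1, h2]
          exact congrArg (fun a => (Q, a)) hEq
        · intro m hm
          simp only [mem_filter, mem_univ, true_and] at hm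
          refine ⟨(Q, m), ?_, rfl⟩
          rw [mem_filter]
          constructor
          · simp only [hIdef, mem_filter, mem_univ, true_and]
            exact ⟨hQl, hm.1, hm.2⟩
          · rfl
      rw [Finset.sum_congr rfl hfib, ← Finset.sum_sdiff hPolesOff]
      have hpolefib : ∀ Q ∈ Poles,
          (univ.filter (fun m => G.Inc Q m ∧ G.Perp m l)).card = r := by
        intro Q hQ
        have hQpole : G.IsPole Q l := by simpa [hPolesDef] using hQ
        have heq : univ.filter (fun m => G.Inc Q m ∧ G.Perp m l)
            = univ.filter (fun m => G.Inc Q m) := by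
          ext m
          simp only [mem_filter, mem_univ, true_and, and_iff_left_iff_imp]
          exact fun hQm => G.pole_all_perp hn hll hQpole hQm
        rw [heq, card_filter_eq_nat_card, hr]
      have hnonfib : ∀ Q ∈ Off \ Poles,
          (univ.filter (fun m => G.Inc Q m ∧ G.Perp m l)).card = 1 := by
        intro Q hQ
        rw [mem_sdiff] at hQ
        have hQl : ¬ G.Inc Q l := by simpa [hOff] using hQ.1
        have hQnp : ¬ G.IsPole Q l := by simpa [hPolesDef] using hQ.2
        obtain ⟨m₀, hm₀, hm₀l⟩ := G.b3 Q l
        rw [Finset.card_eq_one]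
        refine ⟨m₀, ?_⟩
        ext m
        simp only [mem_filter, mem_univ, true_and, mem_singleton]
        constructor
        · rintro ⟨h1, h2⟩
          by_contra hne
          exact hQnp ⟨hQl, m, m₀, hne, h1, hm₀, h2, hm₀l⟩
        · rintro rfl
          exact ⟨hm₀, hm₀l⟩
      rw [Finset.sum_congr rfl hnonfib, Finset.sum_congr rfl hpolefib,
        Finset.sum_const, Finset.sum_const, smul_eq_mul, smul_eq_mul, mul_one]
    -- total point count
    have hv : Fintype.card Point = (Off \ Poles).card + Poles.card + n := by
      have h1 := Finset.card_filter_add_card_filter_not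
        (s := (univ : Finset Point)) (p := fun P => G.Inc P l)
      have h2 : (univ.filter (fun P => G.Inc P l)).card = n := by
        rw [card_filter_eq_nat_card, hn]
      have h3 : (Off \ Poles).card + Poles.card = Off.card :=
        Finset.card_sdiff_add_card_eq_card hPolesOff
      rw [Finset.card_univ, h2, ← hOff] at h1
      omega
    -- arithmetic
    set p := Poles.card with hpdef
    set q := (Off \ Poles).card with hqdef
    have e3 : n * (n - 1) + n = n * n := by
      have h : n - 1 + 1 = n := by omega
      calc n * (n - 1) + n = n * ((n - 1) + 1) := by ring
        _ = n * n := by rw [h]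
    have e4 : p * (r - 1) + p = p * r := by
      have h : r - 1 + 1 = r := by omega
      calc p * (r - 1) + p = p * ((r - 1) + 1) := by ring
        _ = p * r := by rw [h]
    have hIeq : n * (n - 1) = q + p * r := by rw [← hI1]; exact hI2
    have keyeq : n * n = p * (r - 1) + Fintype.card Point := by
      linarith [e3, e4, hv, hIeq]
    have hfinal : Nat.card {P : Point // G.IsPole P l} = p :=
      (card_filter_eq_nat_card _).symm
    rw [hfinal]
    have h5 : n ^ 2 = p * (r - 1) + Nat.card Point := by
      rw [pow_two, Nat.card_eq_fintype_card]
      exact keyeq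
    rw [h5, Nat.add_sub_cancel, Nat.mul_div_cancel p (by omega : 0 < r - 1)]
end
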